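/- Let M be a nonzero n×n real matrix with ker(M) = ker(Mᵀ), ‖M‖₂ ≤ 1, and let U_M = (M+Mᵀ)/2. For α ∈ (0, 1/4], let N = αI + (1−α)M. Then λ_min⁺(I − U_{N²}) ≥ min(α, (1+α)·λ_min⁺(I − U_M)), where λ_min⁺ denotes the smallest nonzero eigenvalue and U_{N²} = (N² + (N²)ᵀ)/2. -/
import Mathlib


open Matrix

/-- The spectral (ℓ₂ operator) norm of a real matrix. -/
noncomputable def sNorm {m n : ℕ} (M : Matrix (Fin m) (Fin n) ℝ) : ℝ :=
  ‖LinearMap.toContinuousLinearMap (Matrix.toEuclideanLin M)‖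

/-- The symmetrization U_X = (X + Xᵀ)/2. -/
noncomputable def symmPart {n : ℕ} (A : Matrix (Fin n) (Fin n) ℝ) : Matrix (Fin n) (Fin n) ℝ :=
  (2⁻¹ : ℝ) • (A + Aᵀ)

/-- The smallest nonzero eigenvalue of a matrix. -/
noncomputable def lamMinPos {n : ℕ} (U : Matrix (Fin n) (Fin n) ℝ) : ℝ :=
  sInf {μ : ℝ | μ ≠ 0 ∧ ∃ v : Fin n → ℝ, v ≠ 0 ∧ U *ᵥ v = μ • v}

open RealInnerProductSpace

noncomputable def eV {n : ℕ} (v : Fin n → ℝ) : EuclideanSpace ℝ (Fin n) :=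
  (WithLp.equiv 2 _).symm v

lemma eV_inner {n : ℕ} (v w : Fin n → ℝ) : ⟪eV v, eV w⟫ = v ⬝ᵥ w := by
  simp [eV, PiLp.inner_apply, RCLike.inner_apply, dotProduct, mul_comm]

lemma eV_norm_sq {n : ℕ} (v : Fin n → ℝ) : ‖eV v‖ ^ 2 = v ⬝ᵥ v := by
  rw [← real_inner_self_eq_norm_sq, eV_inner]

lemma mulVec_dot_le {n : ℕ} {M : Matrix (Fin n) (Fin n) ℝ} (h : sNorm M ≤ 1)
    (v : Fin n → ℝ) : (M *ᵥ v) ⬝ᵥ (M *ᵥ v) ≤ v ⬝ᵥ v := by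
  have h1 : ‖(LinearMap.toContinuousLinearMap (Matrix.toEuclideanLin M)) (eV v)‖
      ≤ 1 * ‖eV v‖ := (LinearMap.toContinuousLinearMap (Matrix.toEuclideanLin M)).le_of_opNorm_le h _
  have h2 : (LinearMap.toContinuousLinearMap (Matrix.toEuclideanLin M)) (eV v) = eV (M *ᵥ v) := by
    simp [eV, Matrix.toEuclideanLin_apply]
  rw [h2, one_mul] at h1
  rw [← eV_norm_sq, ← eV_norm_sq]
  exact pow_le_pow_left₀ (norm_nonneg _) h1 2


lemma dot_self_nonneg {n : ℕ} (v : Fin n → ℝ) : 0 ≤ v ⬝ᵥ v := by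
  rw [← eV_inner]; exact real_inner_self_nonneg

lemma dot_self_eq_zero {n : ℕ} {v : Fin n → ℝ} (h : v ⬝ᵥ v = 0) : v = 0 := by
  rw [← eV_inner] at h
  have h0 : eV v = 0 := inner_self_eq_zero.1 h
  exact congrArg (WithLp.equiv 2 _) h0

lemma dot_self_pos {n : ℕ} {v : Fin n → ℝ} (h : v ≠ 0) : 0 < v ⬝ᵥ v := by
  rcases lt_or_eq_of_le (dot_self_nonneg v) with h1 | h1
  · exact h1
  · exact absurd (dot_self_eq_zero h1.symm) h

lemma dot_CS {n : ℕ} (v w : Fin n → ℝ) : (v ⬝ᵥ w)^2 ≤ (v ⬝ᵥ v) * (w ⬝ᵥ w) := by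
  have := real_inner_mul_inner_self_le (eV v) (eV w)
  rw [eV_inner, eV_inner, eV_inner] at this
  nlinarith [this]

lemma symm_dot {n : ℕ} {A : Matrix (Fin n) (Fin n) ℝ} (hAt : Aᵀ = A)
    (x y : Fin n → ℝ) : x ⬝ᵥ (A *ᵥ y) = (A *ᵥ x) ⬝ᵥ y := by
  rw [dotProduct_mulVec, ← mulVec_transpose, hAt]

lemma sum_sq_dot {n : ℕ} (b : OrthonormalBasis (Fin n) ℝ (EuclideanSpace ℝ (Fin n)))
    (w : Fin n → ℝ) : w ⬝ᵥ w = ∑ i, ((b i : Fin n → ℝ) ⬝ᵥ w)^2 := by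
  have h := b.sum_inner_mul_inner (eV w) (eV w)
  rw [eV_inner] at h
  rw [← h]
  refine Finset.sum_congr rfl fun i _ => ?_
  have h1 : ⟪eV w, b i⟫ = ((b i : Fin n → ℝ) ⬝ᵥ w) := by
    rw [show b i = eV (b i : Fin n → ℝ) from rfl, eV_inner, dotProduct_comm]; rfl
  have h2 : ⟪b i, eV w⟫ = ((b i : Fin n → ℝ) ⬝ᵥ w) := by
    rw [show b i = eV (b i : Fin n → ℝ) from rfl, eV_inner]; rfl
  rw [h1, h2, sq]
open Matrix RealInnerProductSpace

lemma symmPart_transpose {n : ℕ} (A : Matrix (Fin n) (Fin n) ℝ) :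
    (symmPart A)ᵀ = symmPart A := by
  simp [symmPart, transpose_smul, transpose_add, add_comm]

lemma conjT {n : ℕ} (A : Matrix (Fin n) (Fin n) ℝ) : Aᴴ = Aᵀ := by
  ext i j; simp [conjTranspose_apply]

lemma isHerm_of_t {n : ℕ} {A : Matrix (Fin n) (Fin n) ℝ} (h : Aᵀ = A) : A.IsHermitian := by
  rw [Matrix.IsHermitian, conjT, h]

-- quadratic form comparison: v ⬝ (symmPart (N^2) v) ≤ ‖symmPart N v‖²
lemma quad_le {n : ℕ} (N : Matrix (Fin n) (Fin n) ℝ) (v : Fin n → ℝ) :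
    v ⬝ᵥ (symmPart (N^2) *ᵥ v) ≤ (symmPart N *ᵥ v) ⬝ᵥ (symmPart N *ᵥ v) := by
  have hsq : N ^ 2 = N * N := sq N
  set a := N *ᵥ v with ha
  set b := Nᵀ *ᵥ v with hb
  have h1 : v ⬝ᵥ (symmPart (N^2) *ᵥ v) = b ⬝ᵥ a := by
    rw [symmPart, hsq, Matrix.smul_mulVec, Matrix.add_mulVec, dotProduct_smul,
      dotProduct_add]
    rw [← Matrix.mulVec_mulVec, Matrix.dotProduct_mulVec v N, ← Matrix.mulVec_transpose]
    rw [Matrix.transpose_mul, ← Matrix.mulVec_mulVec, Matrix.dotProduct_mulVec v Nᵀ,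
      ← Matrix.mulVec_transpose, Matrix.transpose_transpose]
    rw [← ha, ← hb]
    rw [show b ⬝ᵥ (a) + a ⬝ᵥ b = 2 * (b ⬝ᵥ a) by rw [dotProduct_comm a b]; ring]
    simp [smul_eq_mul]
  have h2 : (symmPart N *ᵥ v) = (2⁻¹ : ℝ) • (a + b) := by
    rw [symmPart, Matrix.smul_mulVec, Matrix.add_mulVec]
  rw [h1, h2]
  have h3 : ((2⁻¹ : ℝ) • (a + b)) ⬝ᵥ ((2⁻¹ : ℝ) • (a + b))
      = 4⁻¹ * (a ⬝ᵥ a + 2 * (a ⬝ᵥ b) + b ⬝ᵥ b) := by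
    rw [smul_dotProduct, dotProduct_smul, add_dotProduct, dotProduct_add, dotProduct_add,
      dotProduct_comm b a]
    simp [smul_eq_mul]; ring
  rw [h3]
  have h4 : 0 ≤ (a - b) ⬝ᵥ (a - b) := dot_self_nonneg _
  rw [sub_dotProduct, dotProduct_sub, dotProduct_sub, dotProduct_comm b a] at h4
  rw [dotProduct_comm b a]
  linarith

lemma quadform {n : ℕ} {A : Matrix (Fin n) (Fin n) ℝ} (hA : A.IsHermitian)
    (w : Fin n → ℝ) :
    w ⬝ᵥ (A *ᵥ w) = ∑ i, hA.eigenvalues i * ((hA.eigenvectorBasis i : Fin n → ℝ) ⬝ᵥ w)^2 := by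
  have hAt : Aᵀ = A := by rw [← conjT]; exact hA
  have h := (hA.eigenvectorBasis).sum_inner_mul_inner (eV w) (eV (A *ᵥ w))
  rw [eV_inner] at h
  rw [← h]
  refine Finset.sum_congr rfl fun i _ => ?_
  have h1 : ⟪eV w, hA.eigenvectorBasis i⟫ = ((hA.eigenvectorBasis i : Fin n → ℝ) ⬝ᵥ w) := by
    have := eV_inner w (hA.eigenvectorBasis i : Fin n → ℝ)
    rw [dotProduct_comm] at this
    exact this
  have h2 : ⟪hA.eigenvectorBasis i, eV (A *ᵥ w)⟫
      = hA.eigenvalues i * ((hA.eigenvectorBasis i : Fin n → ℝ) ⬝ᵥ w) := by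
    have e1 : ⟪hA.eigenvectorBasis i, eV (A *ᵥ w)⟫
        = (hA.eigenvectorBasis i : Fin n → ℝ) ⬝ᵥ (A *ᵥ w) :=
      eV_inner (hA.eigenvectorBasis i : Fin n → ℝ) (A *ᵥ w)
    have e2 : (A *ᵥ (hA.eigenvectorBasis i : Fin n → ℝ)) ⬝ᵥ w
        = (hA.eigenvalues i • (hA.eigenvectorBasis i : Fin n → ℝ)) ⬝ᵥ w :=
      congrArg (· ⬝ᵥ w) (hA.mulVec_eigenvectorBasis i)
    rw [e1, symm_dot hAt, e2, smul_dotProduct, smul_eq_mul]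
  rw [h1, h2]; ring

lemma eigen_sq_le_one {n : ℕ} {S : Matrix (Fin n) (Fin n) ℝ}
    (hSle : ∀ u : Fin n → ℝ, (u ⬝ᵥ (S *ᵥ u))^2 ≤ (u ⬝ᵥ u)^2)
    {μ : ℝ} {u : Fin n → ℝ} (hu : u ≠ 0) (h : S *ᵥ u = μ • u) : μ^2 ≤ 1 := by
  have h1 := hSle u
  rw [h, dotProduct_smul] at h1
  have h2 : 0 < u ⬝ᵥ u := dot_self_pos hu
  have : (μ * (u ⬝ᵥ u))^2 = μ^2 * (u⬝ᵥu)^2 := by ring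
  rw [smul_eq_mul] at h1
  nlinarith [h1, h2, this, mul_pos h2 h2]

lemma key2 {a l s : ℝ} (ha0 : 0 < a) (ha1 : a ≤ 1/4) (hl0 : 0 ≤ l)
    (hla : (1+a)*l ≤ a) (hls : l ≤ s) (hs2 : s ≤ 2) :
    (1+a)*l ≤ 1 - (a + (1-a)*(1-s))^2 := by
  have hl_le : l ≤ a := by nlinarith
  have hT1 : 0 ≤ l*((1-3*a) - (1-a)^2*l) := by
    apply mul_nonneg hl0
    nlinarith [sq_nonneg (1-a), mul_nonneg hl0 (sq_nonneg (1-a))]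
  have hT2 : 0 ≤ 4*a*(1-a) - (1+a)*l := by nlinarith
  have hT3 : 0 ≤ (1-a)^2*((s-l)*((2-s)*(2-l))) := by
    apply mul_nonneg (sq_nonneg _)
    apply mul_nonneg (by linarith)
    apply mul_nonneg (by linarith) (by linarith)
  have hid : (2-l)*((1 - (a + (1-a)*(1-s))^2) - (1+a)*l)
      = (2-s)*(l*((1-3*a) - (1-a)^2*l)) + (s-l)*(4*a*(1-a) - (1+a)*l)
        + (1-a)^2*((s-l)*((2-s)*(2-l))) := by ring
  have hpos : (0:ℝ) < 2 - l := by linarith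
  nlinarith [mul_nonneg (by linarith : (0:ℝ) ≤ 2-s) hT1, mul_nonneg (by linarith : (0:ℝ) ≤ s-l) hT2]

lemma key_scalar {a lam s : ℝ} (ha0 : 0 < a) (ha1 : a ≤ 1/4) (hlam0 : 0 ≤ lam)
    (hls : lam ≤ s) (hs0 : 0 < s) (hs2 : s ≤ 2) :
    min a ((1+a)*lam) ≤ 1 - (a + (1-a)*(1-s))^2 := by
  rcases le_total a ((1+a)*lam) with h | h
  · rw [min_eq_left h]
    have h1a : (0:ℝ) < 1 + a := by linarith
    have hl0 : (0:ℝ) ≤ a/(1+a) := by positivity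
    have hla : (1+a)*(a/(1+a)) ≤ a := by rw [mul_div_cancel₀ _ (ne_of_gt h1a)]
    have hls' : a/(1+a) ≤ s := by
      rw [div_le_iff₀ h1a]
      calc a ≤ (1+a)*lam := h
        _ ≤ (1+a)*s := by nlinarith
        _ = s*(1+a) := by ring
    have := key2 ha0 ha1 hl0 hla hls' hs2
    rw [mul_div_cancel₀ _ (ne_of_gt h1a)] at this
    exact this
  · rw [min_eq_right h]
    exact key2 ha0 ha1 hlam0 h hls hs2

lemma mulVec_one_of_eig_one {n : ℕ} {M : Matrix (Fin n) (Fin n) ℝ}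
    (hnorm : sNorm M ≤ 1) {u : Fin n → ℝ}
    (hSu : symmPart M *ᵥ u = u) : M *ᵥ u = u ∧ Mᵀ *ᵥ u = u := by
  have hSqu : u ⬝ᵥ (symmPart M *ᵥ u) = u ⬝ᵥ (M *ᵥ u) := by
    rw [symmPart, Matrix.smul_mulVec, Matrix.add_mulVec, dotProduct_smul, dotProduct_add,
      Matrix.dotProduct_mulVec u Mᵀ, Matrix.vecMul_transpose, dotProduct_comm (M *ᵥ u) u]
    simp [smul_eq_mul]; ring
  have hquad : u ⬝ᵥ (M *ᵥ u) = u ⬝ᵥ u := by rw [← hSqu, hSu]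
  have hle := mulVec_dot_le hnorm u
  have hzero : (M *ᵥ u - u) ⬝ᵥ (M *ᵥ u - u) = 0 := by
    have hexp : (M *ᵥ u - u) ⬝ᵥ (M *ᵥ u - u)
        = (M *ᵥ u) ⬝ᵥ (M *ᵥ u) - 2 * (u ⬝ᵥ (M *ᵥ u)) + u ⬝ᵥ u := by
      rw [sub_dotProduct, dotProduct_sub, dotProduct_sub, dotProduct_comm (M *ᵥ u) u]
      ring
    have hnn := dot_self_nonneg (M *ᵥ u - u)
    rw [hexp, hquad] at hnn ⊢
    linarith
  have hMu : M *ᵥ u = u := by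
    have := dot_self_eq_zero hzero
    rwa [sub_eq_zero] at this
  refine ⟨hMu, ?_⟩
  have h2 : M *ᵥ u + Mᵀ *ᵥ u = (2:ℝ) • u := by
    have hS' := congrArg (fun x => (2:ℝ) • x) hSu
    simp only [symmPart, Matrix.smul_mulVec, Matrix.add_mulVec, smul_smul] at hS'
    norm_num at hS'
    rw [← hS']
  rw [hMu, two_smul] at h2
  exact add_left_cancel h2


lemma one_le_of_le_mul {x y : ℝ} (hx : 0 < x) (h : x ≤ y * x) : 1 ≤ y := by nlinarith

lemma eig_one_of {a m : ℝ} (ha0 : 0 < a) (ha1 : a ≤ 1/4) (hsq : m^2 ≤ 1)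
    (ht : 1 ≤ (a + (1-a)*m)^2) : m = 1 := by
  have hub : m ≤ 1 := by nlinarith [sq_nonneg (m - 1)]
  have hlb : -1 ≤ m := by nlinarith [sq_nonneg (m + 1)]
  by_contra hne
  have hlt : m < 1 := lt_of_le_of_ne hub hne
  have ht_lt : a + (1-a) * m < 1 := by
    nlinarith [mul_pos (show (0:ℝ) < 1 - a by linarith) (show (0:ℝ) < 1 - m by linarith)]
  have ht_gt : -1 < a + (1-a) * m := by nlinarith
  nlinarith [ht, ht_lt, ht_gt]

/-- For M ≠ 0 with ker M = ker Mᵀ, ‖M‖₂ ≤ 1, α ∈ (0, 1/4] and N = αI + (1−α)M: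
    λ_min⁺(I − U_{N²}) ≥ min(α, (1+α)·λ_min⁺(I − U_M)). -/
theorem stmt18 {n : ℕ} (M : Matrix (Fin n) (Fin n) ℝ) (hM0 : M ≠ 0)
    (hker : LinearMap.ker M.mulVecLin = LinearMap.ker Mᵀ.mulVecLin)
    (hnorm : sNorm M ≤ 1)
    (α : ℝ) (hα0 : 0 < α) (hα1 : α ≤ 1 / 4)
    (N : Matrix (Fin n) (Fin n) ℝ)
    (hN : N = α • (1 : Matrix (Fin n) (Fin n) ℝ) + (1 - α) • M) :
    min α ((1 + α) * lamMinPos ((1 : Matrix (Fin n) (Fin n) ℝ) - symmPart M)) ≤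
      lamMinPos ((1 : Matrix (Fin n) (Fin n) ℝ) - symmPart (N ^ 2)) := by
  classical
  have hSt : (symmPart M)ᵀ = symmPart M := symmPart_transpose M
  have hS : (symmPart M).IsHermitian := isHerm_of_t hSt
  have hUt : (symmPart (N^2))ᵀ = symmPart (N^2) := symmPart_transpose _
  set A : Matrix (Fin n) (Fin n) ℝ := 1 - symmPart (N^2) with hAdef
  have hAt : Aᵀ = A := by rw [hAdef, transpose_sub, transpose_one, hUt]
  have hAh : A.IsHermitian := isHerm_of_t hAt
  set B : Matrix (Fin n) (Fin n) ℝ := 1 - symmPart M with hBdef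
  set EB : Set ℝ := {μ : ℝ | μ ≠ 0 ∧ ∃ v : Fin n → ℝ, v ≠ 0 ∧ B *ᵥ v = μ • v} with hEBdef
  set EA : Set ℝ := {μ : ℝ | μ ≠ 0 ∧ ∃ v : Fin n → ℝ, v ≠ 0 ∧ A *ᵥ v = μ • v} with hEAdef
  have hgoal : lamMinPos B = sInf EB := rfl
  have hgoalA : lamMinPos A = sInf EA := rfl
  -- quadratic form of S equals that of M
  have hSqu : ∀ u : Fin n → ℝ, u ⬝ᵥ (symmPart M *ᵥ u) = u ⬝ᵥ (M *ᵥ u) := by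
    intro u
    rw [symmPart, Matrix.smul_mulVec, Matrix.add_mulVec, dotProduct_smul, dotProduct_add,
      Matrix.dotProduct_mulVec u Mᵀ, Matrix.vecMul_transpose, dotProduct_comm (M *ᵥ u) u]
    simp [smul_eq_mul]; ring
  have hSdot : ∀ u : Fin n → ℝ, (u ⬝ᵥ (symmPart M *ᵥ u))^2 ≤ (u ⬝ᵥ u)^2 := by
    intro u
    rw [hSqu u]
    calc (u ⬝ᵥ (M *ᵥ u))^2 ≤ (u ⬝ᵥ u) * ((M *ᵥ u) ⬝ᵥ (M *ᵥ u)) := dot_CS u (M *ᵥ u)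
      _ ≤ (u ⬝ᵥ u) * (u ⬝ᵥ u) :=
          mul_le_mul_of_nonneg_left (mulVec_dot_le hnorm u) (dot_self_nonneg u)
      _ = (u ⬝ᵥ u)^2 := (sq (u ⬝ᵥ u)).symm
  -- eigenvalues of S are in [-1,1]
  have hbne : ∀ i, (hS.eigenvectorBasis i : Fin n → ℝ) ≠ 0 := by
    intro i h0
    exact hS.eigenvectorBasis.orthonormal.ne_zero i (congrArg eV h0)
  have hSeig : ∀ i, symmPart M *ᵥ (hS.eigenvectorBasis i : Fin n → ℝ)
      = hS.eigenvalues i • (hS.eigenvectorBasis i : Fin n → ℝ) := fun i =>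
    hS.mulVec_eigenvectorBasis i
  have hμsq : ∀ i, (hS.eigenvalues i)^2 ≤ 1 := fun i =>
    eigen_sq_le_one hSdot (hbne i) (hSeig i)
  -- lower bound for EB
  have hEBlb : ∀ μ ∈ EB, 0 ≤ μ := by
    rintro μ ⟨hμ0, w, hw0, hvec⟩
    have hSw : symmPart M *ᵥ w = (1 - μ) • w := by
      rw [hBdef, Matrix.sub_mulVec, Matrix.one_mulVec] at hvec
      have : symmPart M *ᵥ w = w - μ • w := by
        rw [← hvec]; abel
      rw [this, sub_smul, one_smul]
    have := eigen_sq_le_one hSdot hw0 hSw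
    nlinarith [this]
  have hbddEB : BddBelow EB := ⟨0, fun μ hμ => hEBlb μ hμ⟩
  have hlam0 : 0 ≤ sInf EB := Real.sInf_nonneg (fun μ hμ => hEBlb μ hμ)
  -- T = symmPart N
  have hTt : (symmPart N)ᵀ = symmPart N := symmPart_transpose N
  have hTeq : symmPart N = α • (1 : Matrix (Fin n) (Fin n) ℝ) + (1 - α) • symmPart M := by
    rw [hN, symmPart, symmPart, transpose_add, transpose_smul, transpose_smul, transpose_one]
    module
  have hTvec : ∀ i, symmPart N *ᵥ (hS.eigenvectorBasis i : Fin n → ℝ)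
      = (α + (1-α) * hS.eigenvalues i) • (hS.eigenvectorBasis i : Fin n → ℝ) := by
    intro i
    rw [hTeq, Matrix.add_mulVec, Matrix.smul_mulVec, Matrix.smul_mulVec,
      Matrix.one_mulVec, hSeig i, smul_smul, ← add_smul]
  -- eigenvectors of S with eigenvalue 1 are killed by A
  have hkill : ∀ u : Fin n → ℝ, symmPart M *ᵥ u = u → A *ᵥ u = 0 := by
    intro u hSu
    obtain ⟨hMu, hMTu⟩ := mulVec_one_of_eig_one hnorm hSu
    have hNu : N *ᵥ u = u := by
      rw [hN, Matrix.add_mulVec, Matrix.smul_mulVec, Matrix.smul_mulVec,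
        Matrix.one_mulVec, hMu, ← add_smul]
      norm_num
    have hNTu : Nᵀ *ᵥ u = u := by
      rw [hN, transpose_add, transpose_smul, transpose_smul, transpose_one,
        Matrix.add_mulVec, Matrix.smul_mulVec, Matrix.smul_mulVec,
        Matrix.one_mulVec, hMTu, ← add_smul]
      norm_num
    have hN2u : N^2 *ᵥ u = u := by
      rw [sq, ← Matrix.mulVec_mulVec, hNu, hNu]
    have hN2Tu : (N^2)ᵀ *ᵥ u = u := by
      rw [sq, transpose_mul, ← Matrix.mulVec_mulVec, hNTu, hNTu]
    have hU2u : symmPart (N^2) *ᵥ u = u := by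
      rw [symmPart, Matrix.smul_mulVec, Matrix.add_mulVec, hN2u, hN2Tu, smul_add]
      module
    rw [hAdef, Matrix.sub_mulVec, Matrix.one_mulVec, hU2u, sub_self]
  -- main bound for elements of EA
  have hmain : ∀ ν ∈ EA, min α ((1 + α) * sInf EB) ≤ ν := by
    rintro ν ⟨hν0, v, hv0, hAv⟩
    set c : Fin n → ℝ := fun i => (hS.eigenvectorBasis i : Fin n → ℝ) ⬝ᵥ v with hcdef
    set t : Fin n → ℝ := fun i => α + (1-α) * hS.eigenvalues i with htdef
    have h5 : v ⬝ᵥ v = ∑ i, (c i)^2 := sum_sq_dot hS.eigenvectorBasis v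
    have hTv : (symmPart N *ᵥ v) ⬝ᵥ (symmPart N *ᵥ v)
        = ∑ i, ((hS.eigenvectorBasis i : Fin n → ℝ) ⬝ᵥ (symmPart N *ᵥ v))^2 :=
      sum_sq_dot hS.eigenvectorBasis (symmPart N *ᵥ v)
    have hcoef : ∀ i, (hS.eigenvectorBasis i : Fin n → ℝ) ⬝ᵥ (symmPart N *ᵥ v)
        = t i * c i := by
      intro i
      rw [symm_dot hTt, congrArg (· ⬝ᵥ v) (hTvec i), smul_dotProduct, smul_eq_mul]
    have h1 : ν * (v ⬝ᵥ v) = v ⬝ᵥ v - v ⬝ᵥ (symmPart (N^2) *ᵥ v) := by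
      have e1 : v ⬝ᵥ (A *ᵥ v) = ν * (v ⬝ᵥ v) := by
        rw [hAv, dotProduct_smul, smul_eq_mul]
      rw [← e1, hAdef, Matrix.sub_mulVec, Matrix.one_mulVec, dotProduct_sub]
    have h3 : v ⬝ᵥ (symmPart (N^2) *ᵥ v) ≤ (symmPart N *ᵥ v) ⬝ᵥ (symmPart N *ᵥ v) :=
      quad_le N v
    have htermwise : ∀ i, min α ((1 + α) * sInf EB) * (c i)^2 ≤ (1 - (t i)^2) * (c i)^2 := by
      intro i
      by_cases hμi : hS.eigenvalues i = 1
      · have hSu : symmPart M *ᵥ (hS.eigenvectorBasis i : Fin n → ℝ)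
            = (hS.eigenvectorBasis i : Fin n → ℝ) := by
          rw [hSeig i, hμi, one_smul]
        have hAu := hkill _ hSu
        have hc0 : c i = 0 := by
          have e1 : (hS.eigenvectorBasis i : Fin n → ℝ) ⬝ᵥ (A *ᵥ v) = ν * c i := by
            rw [hAv, dotProduct_smul, smul_eq_mul]
          rw [symm_dot hAt, hAu, zero_dotProduct] at e1
          exact (mul_eq_zero.1 e1.symm).resolve_left hν0
        rw [hc0]
        norm_num
      · set s : ℝ := 1 - hS.eigenvalues i with hsdef
        have hmem : s ∈ EB := by
          refine ⟨sub_ne_zero_of_ne (Ne.symm hμi), (hS.eigenvectorBasis i : Fin n → ℝ),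
            hbne i, ?_⟩
          rw [hBdef, Matrix.sub_mulVec, Matrix.one_mulVec, hSeig i, hsdef, sub_smul, one_smul]
        have hlams : sInf EB ≤ s := csInf_le hbddEB hmem
        have hsq := hμsq i
        have hs2 : s ≤ 2 := by rw [hsdef]; nlinarith [hsq, sq_nonneg (hS.eigenvalues i + 1), sq_nonneg (hS.eigenvalues i - 1)]
        have hs0 : 0 < s := by
          rcases lt_or_eq_of_le (by rw [hsdef]; nlinarith [hsq, sq_nonneg (hS.eigenvalues i + 1), sq_nonneg (hS.eigenvalues i - 1)] : (0:ℝ) ≤ s) with h | h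
          · exact h
          · exact absurd (by rw [hsdef] at h; linarith : hS.eigenvalues i = 1) hμi
        have hkey := key_scalar hα0 hα1 hlam0 hlams hs0 hs2
        have ht : t i = α + (1-α) * (1 - s) := by rw [htdef, hsdef]; ring
        rw [← ht] at hkey
        exact mul_le_mul_of_nonneg_right hkey (sq_nonneg _)
    have hsum : ∑ i, (1 - (t i)^2) * (c i)^2
        = (v ⬝ᵥ v) - (symmPart N *ᵥ v) ⬝ᵥ (symmPart N *ᵥ v) := by
      rw [hTv, h5, ← Finset.sum_sub_distrib]
      refine Finset.sum_congr rfl fun i _ => ?_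
      rw [hcoef i]
      ring
    have hge : min α ((1 + α) * sInf EB) * (v ⬝ᵥ v) ≤ ν * (v ⬝ᵥ v) := by
      calc min α ((1 + α) * sInf EB) * (v ⬝ᵥ v)
          = ∑ i, min α ((1 + α) * sInf EB) * (c i)^2 := by rw [h5, Finset.mul_sum]
        _ ≤ ∑ i, (1 - (t i)^2) * (c i)^2 := Finset.sum_le_sum (fun i _ => htermwise i)
        _ = (v ⬝ᵥ v) - (symmPart N *ᵥ v) ⬝ᵥ (symmPart N *ᵥ v) := hsum
        _ ≤ (v ⬝ᵥ v) - v ⬝ᵥ (symmPart (N^2) *ᵥ v) := by linarith [h3]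
        _ = ν * (v ⬝ᵥ v) := h1.symm
    exact le_of_mul_le_mul_right hge (dot_self_pos hv0)
  -- case split on EA nonempty
  rw [hgoal, hgoalA]
  by_cases hEA : EA.Nonempty
  · exact le_csInf hEA hmain
  · -- degenerate case: EA empty
    rw [Set.not_nonempty_iff_eq_empty] at hEA
    have hall : ∀ i, hAh.eigenvalues i = 0 := by
      intro i
      by_contra hne
      have hbneA : (hAh.eigenvectorBasis i : Fin n → ℝ) ≠ 0 := by
        intro h0
        exact hAh.eigenvectorBasis.orthonormal.ne_zero i (congrArg eV h0)
      have : hAh.eigenvalues i ∈ EA :=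
        ⟨hne, (hAh.eigenvectorBasis i : Fin n → ℝ), hbneA, hAh.mulVec_eigenvectorBasis i⟩
      rw [hEA] at this
      exact this
    have hquadA : ∀ w : Fin n → ℝ, w ⬝ᵥ (A *ᵥ w) = 0 := by
      intro w
      rw [quadform hAh]
      simp [hall]
    have hμ1 : ∀ j, hS.eigenvalues j = 1 := by
      intro j
      set u : Fin n → ℝ := (hS.eigenvectorBasis j : Fin n → ℝ) with hudef
      have hq := hquadA u
      rw [hAdef, Matrix.sub_mulVec, Matrix.one_mulVec, dotProduct_sub] at hq
      have h3 : u ⬝ᵥ (symmPart (N^2) *ᵥ u) ≤ (symmPart N *ᵥ u) ⬝ᵥ (symmPart N *ᵥ u) :=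
        quad_le N u
      have hTu : (symmPart N *ᵥ u) ⬝ᵥ (symmPart N *ᵥ u)
          = (α + (1-α) * hS.eigenvalues j)^2 * (u ⬝ᵥ u) := by
        rw [hTvec j, smul_dotProduct, dotProduct_smul, smul_eq_mul, smul_eq_mul]
        ring
      have hupos : 0 < u ⬝ᵥ u := dot_self_pos (hbne j)
      have hsq := hμsq j
      have h1le : u ⬝ᵥ u ≤ (α + (1-α) * hS.eigenvalues j)^2 * (u ⬝ᵥ u) := by
        linarith [h3, hq, hTu]
      have htj1 : 1 ≤ (α + (1-α) * hS.eigenvalues j)^2 :=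
        one_le_of_le_mul hupos h1le
      exact eig_one_of hα0 hα1 hsq htj1
    have hSid : ∀ w : Fin n → ℝ, symmPart M *ᵥ w = w := by
      intro w
      have hq : w ⬝ᵥ (symmPart M *ᵥ w) = w ⬝ᵥ w := by
        rw [quadform hS, sum_sq_dot hS.eigenvectorBasis w]
        refine Finset.sum_congr rfl fun i _ => ?_
        rw [hμ1 i, one_mul]
      have hSS : (symmPart M *ᵥ w) ⬝ᵥ (symmPart M *ᵥ w) = w ⬝ᵥ w := by
        rw [sum_sq_dot hS.eigenvectorBasis (symmPart M *ᵥ w),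
          sum_sq_dot hS.eigenvectorBasis w]
        refine Finset.sum_congr rfl fun i _ => ?_
        rw [symm_dot hSt, congrArg (· ⬝ᵥ w) (hSeig i), smul_dotProduct, hμ1 i, one_smul]
      have hzero : (symmPart M *ᵥ w - w) ⬝ᵥ (symmPart M *ᵥ w - w) = 0 := by
        rw [sub_dotProduct, dotProduct_sub, dotProduct_sub, hSS,
          dotProduct_comm (symmPart M *ᵥ w) w, hq]
        ring
      have := dot_self_eq_zero hzero
      rwa [sub_eq_zero] at this
    have hEB0 : EB = ∅ := by
      rw [Set.eq_empty_iff_forall_notMem]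
      rintro μ ⟨hμ0, w, hw0, hvec⟩
      rw [hBdef, Matrix.sub_mulVec, Matrix.one_mulVec, hSid w, sub_self] at hvec
      rcases (smul_eq_zero.1 hvec.symm) with h | h
      · exact hμ0 h
      · exact hw0 h
    rw [hEA, hEB0, Real.sInf_empty, mul_zero, min_eq_right (le_of_lt hα0)]
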